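/- arXiv:2511.10967 — 4 statements merged into one kernel-verified Lean document; each statement's English description precedes it below -/
import Mathlib

section
/- Let π : ℝ → ℝ be a probability density that is symmetric about 0 and unimodal, meaning π is nondecreasing on (-∞, 0] and nonincreasing on [0, ∞). Let Π be its CDF. Then for every x ≥ 0, ∫_ℝ min(π(x + y), π(y)) dy = 2 (1 - Π(x/2)). -/
open MeasureTheory Set

lemma setIntegral_add_left_Ioi (f : ℝ → ℝ) (c a : ℝ) :
    (∫ y in Set.Ioi a, f (c + y)) = ∫ y in Set.Ioi (c + a), f y := by
  have A : MeasurableEmbedding (fun x : ℝ => c + x) :=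
    (Homeomorph.addLeft c).isClosedEmbedding.measurableEmbedding
  have h := A.setIntegral_map (μ := volume) f (Set.Ioi (c + a))
  rw [show (fun x : ℝ => c + x) = (c + ·) from rfl, MeasureTheory.map_add_left_eq_self volume c] at h
  have hpre : (fun x : ℝ => c + x) ⁻¹' Set.Ioi (c + a) = Set.Ioi a := by
    ext z; simp
  rw [h, hpre]

/-- For a symmetric unimodal density,
`∫ min(π(x+y), π(y)) dy = 2(1 - Π(x/2))` for `x ≥ 0`. -/
theorem min_convolution_eq_two_tail
    (π : ℝ → ℝ) (hmeas : Measurable π) (hnonneg : ∀ x, 0 ≤ π x)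
    (hint : Integrable π) (hone : ∫ x, π x = 1)
    (hsymm : ∀ t, π t = π (-t))
    (hmono : MonotoneOn π (Set.Iic (0 : ℝ)))
    (hanti : AntitoneOn π (Set.Ici (0 : ℝ))) :
    ∀ x : ℝ, 0 ≤ x →
      (∫ y, min (π (x + y)) (π y)) = 2 * (1 - ∫ t in Set.Iic (x / 2), π t) := by
  intro x hx
  set g : ℝ → ℝ := fun y => min (π (x + y)) (π y) with hg
  have hgmeas : Measurable g := (hmeas.comp (measurable_const_add x)).min hmeas
  have hgint : Integrable g := by
    refine hint.mono hgmeas.aestronglyMeasurable (ae_of_all _ fun y => ?_)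
    have h0 : 0 ≤ g y := le_min (hnonneg _) (hnonneg _)
    have h1 : g y ≤ π y := min_le_right _ _
    simp only [Real.norm_eq_abs, abs_of_nonneg h0, abs_of_nonneg (hnonneg y)]
    exact h1
  -- split
  have hsplit : (∫ y, g y) = (∫ y in Set.Iic (-(x/2)), g y) + ∫ y in Set.Ioi (-(x/2)), g y :=
    (intervalIntegral.integral_Iic_add_Ioi hgint.integrableOn hgint.integrableOn).symm
  -- on Iic (-(x/2)), g = π
  have h1 : (∫ y in Set.Iic (-(x/2)), g y) = ∫ y in Set.Iic (-(x/2)), π y := by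
    refine setIntegral_congr_fun measurableSet_Iic fun y hy => ?_
    have hy' : y ≤ -(x/2) := hy
    have hle : π y ≤ π (x + y) := by
      rcases le_or_gt (x + y) 0 with h | h
      · exact hmono (by simpa using hy'.trans (by linarith : -(x/2) ≤ (0:ℝ))) h (by linarith)
      · have h2 : x + y ≤ -y := by linarith
        calc π y = π (-y) := hsymm y
          _ ≤ π (x + y) := hanti (mem_Ici.mpr h.le) (mem_Ici.mpr (by linarith : (0:ℝ) ≤ -y)) h2
    simp [hg, min_eq_right hle]
  -- on Ioi (-(x/2)), g = π (x + ·)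
  have h2 : (∫ y in Set.Ioi (-(x/2)), g y) = ∫ y in Set.Ioi (-(x/2)), π (x + y) := by
    refine setIntegral_congr_fun measurableSet_Ioi fun y hy => ?_
    have hy' : -(x/2) < y := hy
    have hle : π (x + y) ≤ π y := by
      rcases le_or_gt 0 y with h | h
      · exact hanti (mem_Ici.mpr h) (mem_Ici.mpr (by linarith)) (by linarith)
      · have h2 : -y ≤ x + y := by linarith
        calc π (x + y) ≤ π (-y) := hanti (mem_Ici.mpr (by linarith : (0:ℝ) ≤ -y)) (mem_Ici.mpr (by linarith)) h2
          _ = π y := (hsymm y).symm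
    simp [hg, min_eq_left hle]
  -- the Iic integral equals tail integral via symmetry
  have h3 : (∫ y in Set.Iic (-(x/2)), π y) = ∫ y in Set.Ioi (x/2), π y := by
    have := integral_comp_neg_Iic (-(x/2)) π
    rw [neg_neg] at this
    rw [← this]
    exact setIntegral_congr_fun measurableSet_Iic fun y _ => hsymm y
  -- translation
  have h4 : (∫ y in Set.Ioi (-(x/2)), π (x + y)) = ∫ y in Set.Ioi (x/2), π y := by
    rw [setIntegral_add_left_Ioi π x (-(x/2))]
    ring_nf
  -- tail identity
  have h5 : (∫ y in Set.Ioi (x/2), π y) = 1 - ∫ t in Set.Iic (x/2), π t := by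
    have := intervalIntegral.integral_Iic_add_Ioi (b := x/2) hint.integrableOn hint.integrableOn
    rw [hone] at this
    linarith
  calc (∫ y, g y) = (∫ y in Set.Iic (-(x/2)), π y) + ∫ y in Set.Ioi (-(x/2)), π (x + y) := by
        rw [hsplit, h1, h2]
    _ = (1 - ∫ t in Set.Iic (x/2), π t) + (1 - ∫ t in Set.Iic (x/2), π t) := by
        rw [h3, h4, h5]
    _ = 2 * (1 - ∫ t in Set.Iic (x / 2), π t) := by ring
end

section
/- Let π be a probability density on ℝ symmetric about 0, unimodal (nondecreasing on (-∞,0], nonincreasing on [0,∞)), with finite strictly positive variance, and let Π be its CDF. Let φ be any probability density on ℝ symmetric about 0. Then 4 ∫_0^∞ x (1 - Π(x)) (1 - 4x φ(2x)) dx > 0. -/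
/-!
Write `G = 1 - Π` for the tail of `π` and `σ² = ∫ x² π`. By Fubini `∫₀^∞ x G(x) dx = σ² / 4`,
and by symmetry `∫₀^∞ φ(2x) dx = 1 / 4`, so the integral equals `∫₀^∞ (σ² - 4x² G(x)) φ(2x) dx`.
Unimodality sharpens Chebyshev's inequality to `4x² G(x) < σ²` for every `x > 0`, and `φ(2·)`
has positive mass on `(0, ∞)`.
-/

open MeasureTheory Set

lemma integral_eq_two_mul_integral_Ioi_of_even {f : ℝ → ℝ} (hf : f.Even) :
    ∫ x, f x = 2 * ∫ x in Ioi 0, f x := by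
  rw [← integral_comp_abs]
  congr 1 with x
  rcases abs_choice x with h | h <;> rw [h]
  exact (hf x).symm

lemma integral_Ioi_comp_two_mul_of_even {f : ℝ → ℝ} (hf : f.Even) :
    ∫ x in Ioi 0, f (2 * x) = (∫ x, f x) / 4 := by
  rw [integral_comp_mul_left_Ioi f 0 two_pos, mul_zero, smul_eq_mul,
    integral_eq_two_mul_integral_Ioi_of_even hf]
  ring

section AntitoneTail

variable {f : ℝ → ℝ}

lemma integrable_sq_sub_mul (hfi : Integrable f) (hmom : Integrable fun t => t ^ 2 * f t)
    (a : ℝ) : Integrable fun t => (t ^ 2 - a) * f t :=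
  (hmom.sub (hfi.const_mul a)).congr (ae_of_all _ fun t => by simp only [Pi.sub_apply]; ring)

lemma integral_Ioi_sq_mul_sub_eq (hfi : Integrable f) (hmom : Integrable fun t => t ^ 2 * f t)
    {x c : ℝ} (hx : 0 ≤ x) (hxc : x ≤ c) :
    (∫ t in Ioi 0, t ^ 2 * f t) - 2 * x ^ 2 * ∫ t in Ioi x, f t
      = (∫ t in Ioc 0 x, t ^ 2 * f t) + (∫ t in Ioc x c, (t ^ 2 - 2 * x ^ 2) * f t)
        + ∫ t in Ioi c, (t ^ 2 - 2 * x ^ 2) * f t := by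
  have hg := integrable_sq_sub_mul hfi hmom (2 * x ^ 2)
  have hsplit₁ : ∫ t in Ioi 0, t ^ 2 * f t
      = (∫ t in Ioc 0 x, t ^ 2 * f t) + ∫ t in Ioi x, t ^ 2 * f t := by
    rw [← setIntegral_union (Ioc_disjoint_Ioi le_rfl) measurableSet_Ioi hmom.integrableOn
      hmom.integrableOn, Ioc_union_Ioi_eq_Ioi hx]
  have hsplit₂ : ∫ t in Ioi x, (t ^ 2 - 2 * x ^ 2) * f t
      = (∫ t in Ioc x c, (t ^ 2 - 2 * x ^ 2) * f t)
        + ∫ t in Ioi c, (t ^ 2 - 2 * x ^ 2) * f t := by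
    rw [← setIntegral_union (Ioc_disjoint_Ioi le_rfl) measurableSet_Ioi hg.integrableOn
      hg.integrableOn, Ioc_union_Ioi_eq_Ioi hxc]
  have hlin : ∫ t in Ioi x, (t ^ 2 - 2 * x ^ 2) * f t
      = (∫ t in Ioi x, t ^ 2 * f t) - 2 * x ^ 2 * ∫ t in Ioi x, f t := by
    simp only [sub_mul]
    rw [integral_sub hmom.integrableOn (hfi.integrableOn.const_mul _), integral_const_mul]
  linarith

/- The weight `t ^ 2 - 2 * x ^ 2` changes sign at `c = √2 * x`. Freezing `f` at `f x` can only
lower the integral over `(0, c]`: there `f t ≥ f x` where the weight is positive and `f t ≤ f x`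
where it is negative. The frozen integral is `f x * x ^ 2 * (2 * x - 4 / 3 * c) > 0`. -/
lemma two_mul_sq_mul_integral_Ioi_lt_of_pos (hf0 : ∀ t, 0 ≤ f t) (hfi : Integrable f)
    (hanti : AntitoneOn f (Ici 0)) (hmom : Integrable fun t => t ^ 2 * f t) {x : ℝ} (hx : 0 < x)
    (hfx : 0 < f x) :
    2 * x ^ 2 * ∫ t in Ioi x, f t < ∫ t in Ioi 0, t ^ 2 * f t := by
  set c := √2 * x
  have hc0 : 0 < c := by positivity
  have hc2 : c ^ 2 = 2 * x ^ 2 := by rw [mul_pow, Real.sq_sqrt zero_le_two]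
  have hxc : x < c := by nlinarith
  have hc : c < 3 / 2 * x := by nlinarith
  have hsplit := integral_Ioi_sq_mul_sub_eq hfi hmom hx.le hxc.le
  have hleft : ∫ t in Ioc 0 x, t ^ 2 * f x ≤ ∫ t in Ioc 0 x, t ^ 2 * f t :=
    setIntegral_mono_on (Continuous.integrableOn_Ioc (by fun_prop)) hmom.integrableOn
      measurableSet_Ioc fun t ht =>
        mul_le_mul_of_nonneg_left (hanti ht.1.le hx.le ht.2) (sq_nonneg t)
  have hmid : ∫ t in Ioc x c, (t ^ 2 - 2 * x ^ 2) * f x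
      ≤ ∫ t in Ioc x c, (t ^ 2 - 2 * x ^ 2) * f t :=
    setIntegral_mono_on (Continuous.integrableOn_Ioc (by fun_prop))
      (integrable_sq_sub_mul hfi hmom _).integrableOn measurableSet_Ioc fun t ht =>
        mul_le_mul_of_nonpos_left (hanti hx.le (hx.trans ht.1).le ht.1.le)
          (by nlinarith [ht.1, ht.2])
  have hright : 0 ≤ ∫ t in Ioi c, (t ^ 2 - 2 * x ^ 2) * f t :=
    setIntegral_nonneg measurableSet_Ioi fun t (ht : c < t) => mul_nonneg (by nlinarith) (hf0 t)
  rw [← intervalIntegral.integral_of_le hx.le, intervalIntegral.integral_mul_const,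
    integral_pow] at hleft
  rw [← intervalIntegral.integral_of_le hxc.le, intervalIntegral.integral_mul_const,
    intervalIntegral.integral_sub ((continuous_pow 2).intervalIntegrable _ _)
      intervalIntegrable_const, integral_pow, intervalIntegral.integral_const,
      smul_eq_mul] at hmid
  norm_num at hleft hmid
  have hgap : 0 < f x * (x ^ 2 * (3 / 2 * x - c)) := by
    have := sub_pos.2 hc
    positivity
  have hc3 : c ^ 3 * f x = 2 * x ^ 2 * c * f x := by rw [pow_succ, hc2]
  linarith

lemma two_mul_sq_mul_integral_Ioi_lt (hf0 : ∀ t, 0 ≤ f t) (hfi : Integrable f)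
    (hanti : AntitoneOn f (Ici 0)) (hmom : Integrable fun t => t ^ 2 * f t)
    (hpos : 0 < ∫ t in Ioi 0, t ^ 2 * f t) {x : ℝ} (hx : 0 < x) :
    2 * x ^ 2 * ∫ t in Ioi x, f t < ∫ t in Ioi 0, t ^ 2 * f t := by
  rcases (hf0 x).eq_or_lt with hfx | hfx
  · have htail : ∫ t in Ioi x, f t = 0 :=
      setIntegral_eq_zero_of_forall_eq_zero fun t (ht : x < t) =>
        le_antisymm (hfx ▸ hanti hx.le (hx.trans ht).le ht.le) (hf0 t)
    rwa [htail, mul_zero]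
  · exact two_mul_sq_mul_integral_Ioi_lt_of_pos hf0 hfi hanti hmom hx hfx

lemma antitone_integral_Ioi (hf0 : ∀ t, 0 ≤ f t) (hfi : Integrable f) :
    Antitone fun x => ∫ t in Ioi x, f t := fun _ _ hab =>
  setIntegral_mono_set hfi.integrableOn (ae_of_all _ hf0) (Ioi_subset_Ioi hab).eventuallyLE

end AntitoneTail

section TailMoment

variable {f : ℝ → ℝ}

lemma integral_Ioi_indicator_Iio_mul_const {t : ℝ} (ht : 0 ≤ t) (a : ℝ) :
    ∫ x in Ioi 0, (Iio t).indicator (fun x => x * a) x = t ^ 2 / 2 * a := by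
  rw [integral_indicator measurableSet_Iio, Measure.restrict_restrict measurableSet_Iio,
    Iio_inter_Ioi, integral_mul_const, ← integral_Ioc_eq_integral_Ioo,
    ← intervalIntegral.integral_of_le ht, integral_id]
  ring

lemma integrable_indicator_lt_fst_mul_snd (hf : Integrable f)
    (hmom : Integrable fun t => t ^ 2 * f t) :
    Integrable ({p : ℝ × ℝ | p.1 < p.2}.indicator fun p => p.1 * f p.2)
      ((volume.restrict (Ioi 0)).prod (volume.restrict (Ioi 0))) := by
  have hmeas : AEStronglyMeasurable ({p : ℝ × ℝ | p.1 < p.2}.indicator fun p => p.1 * f p.2)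
      ((volume.restrict (Ioi 0)).prod (volume.restrict (Ioi 0))) :=
    (continuous_fst.aestronglyMeasurable.mul hf.aestronglyMeasurable.restrict.comp_snd).indicator
      (measurableSet_lt measurable_fst measurable_snd)
  refine (integrable_prod_iff' hmeas).2 ⟨ae_of_all _ fun t => ?_, ?_⟩
  · change Integrable ((Iio t).indicator fun x => x * f t) _
    rw [integrable_indicator_iff measurableSet_Iio, IntegrableOn,
      Measure.restrict_restrict measurableSet_Iio, Iio_inter_Ioi]
    exact (Continuous.integrableOn_Ioc (by fun_prop)).mono_set Ioo_subset_Ioc_self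
  · refine (hmom.norm.div_const 2).integrableOn.congr_fun (fun t (ht : 0 < t) => ?_)
      measurableSet_Ioi
    change _ = ∫ x in Ioi 0, ‖(Iio t).indicator (fun x => x * f t) x‖
    have hnorm : ∀ x ∈ Ioi (0 : ℝ), ‖(Iio t).indicator (fun x => x * f t) x‖
        = (Iio t).indicator (fun x => x * ‖f t‖) x := fun x (hx : 0 < x) => by
      unfold indicator
      split_ifs <;> simp [abs_of_pos hx]
    rw [setIntegral_congr_fun measurableSet_Ioi hnorm,
      integral_Ioi_indicator_Iio_mul_const ht.le]
    simp only [norm_mul, Real.norm_of_nonneg (sq_nonneg t)]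
    ring

lemma integral_Ioi_indicator_Ioi_const_mul {x : ℝ} (hx : 0 ≤ x) :
    ∫ t in Ioi 0, (Ioi x).indicator (fun t => x * f t) t = x * ∫ t in Ioi x, f t := by
  rw [integral_indicator measurableSet_Ioi, Measure.restrict_restrict measurableSet_Ioi,
    Ioi_inter_Ioi, sup_eq_left.2 hx, integral_const_mul]

lemma integrableOn_mul_integral_Ioi (hf : Integrable f)
    (hmom : Integrable fun t => t ^ 2 * f t) :
    IntegrableOn (fun x => x * ∫ t in Ioi x, f t) (Ioi 0) :=
  IntegrableOn.congr_fun (integrable_indicator_lt_fst_mul_snd hf hmom).integral_prod_left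
    (fun x (hx : 0 < x) => integral_Ioi_indicator_Ioi_const_mul hx.le) measurableSet_Ioi

lemma integral_Ioi_mul_integral_Ioi (hf : Integrable f)
    (hmom : Integrable fun t => t ^ 2 * f t) :
    ∫ x in Ioi 0, x * ∫ t in Ioi x, f t = ∫ t in Ioi 0, t ^ 2 / 2 * f t := calc
  _ = ∫ x in Ioi 0, ∫ t in Ioi 0, (Ioi x).indicator (fun t => x * f t) t :=
    setIntegral_congr_fun measurableSet_Ioi fun x (hx : 0 < x) =>
      (integral_Ioi_indicator_Ioi_const_mul hx.le).symm
  _ = ∫ t in Ioi 0, ∫ x in Ioi 0, (Iio t).indicator (fun x => x * f t) x :=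
    integral_integral_swap (integrable_indicator_lt_fst_mul_snd hf hmom)
  _ = ∫ t in Ioi 0, t ^ 2 / 2 * f t :=
    setIntegral_congr_fun measurableSet_Ioi fun t (ht : 0 < t) =>
      integral_Ioi_indicator_Iio_mul_const ht.le (f t)

end TailMoment

lemma setIntegral_mul_pos {α : Type*} [MeasurableSpace α] {μ : Measure α} {s : Set α}
    {g h : α → ℝ} (hs : MeasurableSet s) (hg : ∀ x ∈ s, 0 < g x) (hh : ∀ x ∈ s, 0 ≤ h x)
    (hhi : IntegrableOn h s μ) (hghi : IntegrableOn (fun x => g x * h x) s μ)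
    (hpos : 0 < ∫ x in s, h x ∂μ) :
    0 < ∫ x in s, g x * h x ∂μ := by
  rw [setIntegral_pos_iff_support_of_nonneg_ae (ae_restrict_of_forall_mem hs hh) hhi] at hpos
  rw [setIntegral_pos_iff_support_of_nonneg_ae
    (ae_restrict_of_forall_mem hs fun x hx => mul_nonneg (hg x hx).le (hh x hx)) hghi]
  exact hpos.trans_le (measure_mono fun x ⟨hx, hxs⟩ => ⟨mul_ne_zero (hg x hxs).ne' hx, hxs⟩)

section Covariance

variable {f g : ℝ → ℝ}

lemma integrableOn_sub_sq_mul_integral_Ioi_mul (hf0 : ∀ t, 0 ≤ f t) (hfi : Integrable f)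
    (hg : IntegrableOn g (Ioi 0)) {m : ℝ}
    (hgap : ∀ x ∈ Ioi (0 : ℝ), 0 ≤ m - 2 * x ^ 2 * ∫ t in Ioi x, f t) :
    IntegrableOn (fun x => (m - 2 * x ^ 2 * ∫ t in Ioi x, f t) * g x) (Ioi 0) := by
  refine hg.bdd_mul (c := m) ?_ (ae_restrict_of_forall_mem measurableSet_Ioi fun x hx => ?_)
  · exact (measurable_const.sub ((by fun_prop : Measurable fun x : ℝ => 2 * x ^ 2).mul
      (antitone_integral_Ioi hf0 hfi).measurable)).aestronglyMeasurable
  · have htail : 0 ≤ ∫ t in Ioi x, f t := setIntegral_nonneg measurableSet_Ioi fun t _ => hf0 t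
    rw [Real.norm_of_nonneg (hgap x hx)]
    nlinarith [sq_nonneg x]

lemma integral_Ioi_mul_integral_Ioi_mul_eq (hfi : Integrable f)
    (hmom : Integrable fun t => t ^ 2 * f t) (hg : IntegrableOn g (Ioi 0))
    (hg4 : ∫ x in Ioi 0, g x = 1 / 4)
    (hD : IntegrableOn (fun x => ((∫ t in Ioi 0, t ^ 2 * f t) - 2 * x ^ 2 * ∫ t in Ioi x, f t)
      * g x) (Ioi 0)) :
    ∫ x in Ioi 0, x * (∫ t in Ioi x, f t) * (1 - 4 * x * g x)
      = 2 * ∫ x in Ioi 0,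
          ((∫ t in Ioi 0, t ^ 2 * f t) - 2 * x ^ 2 * ∫ t in Ioi x, f t) * g x := by
  set m := ∫ t in Ioi 0, t ^ 2 * f t
  have hxG := integrableOn_mul_integral_Ioi hfi hmom
  have hsub : IntegrableOn (fun x => x * (∫ t in Ioi x, f t) - 2 * m * g x) (Ioi 0) :=
    hxG.sub (hg.const_mul _)
  have hhalf : ∫ x in Ioi 0, x * ∫ t in Ioi x, f t = m / 2 := by
    rw [integral_Ioi_mul_integral_Ioi hfi hmom, ← integral_div]
    congr 1 with t
    ring
  calc _ = ∫ x in Ioi 0, (x * (∫ t in Ioi x, f t) - 2 * m * g x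
          + 2 * ((m - 2 * x ^ 2 * ∫ t in Ioi x, f t) * g x)) :=
        setIntegral_congr_fun measurableSet_Ioi fun x _ => by ring
    _ = _ := by
      rw [integral_add hsub (hD.const_mul 2), integral_sub hxG (hg.const_mul _),
        integral_const_mul, integral_const_mul, hhalf, hg4]
      ring

end Covariance

theorem covariance_pos_general
    (π φ : ℝ → ℝ)
    (hπnonneg : ∀ x, 0 ≤ π x) (hφnonneg : ∀ x, 0 ≤ φ x)
    (hπint : Integrable π) (hφint : Integrable φ)
    (hπone : ∫ x, π x = 1) (hφone : ∫ x, φ x = 1)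
    (hπsymm : ∀ t, π t = π (-t)) (hφsymm : ∀ t, φ t = φ (-t))
    (hanti : AntitoneOn π (Set.Ici (0 : ℝ)))
    (hmom : Integrable (fun x => x ^ 2 * π x))
    (hvarpos : 0 < ∫ x, x ^ 2 * π x) :
    0 < 4 * ∫ x in Set.Ioi (0 : ℝ),
        x * (1 - ∫ t in Set.Iic x, π t) * (1 - 4 * x * φ (2 * x)) := by
  have hm : 0 < ∫ t in Ioi 0, t ^ 2 * π t := by
    rw [integral_eq_two_mul_integral_Ioi_of_even fun t => by rw [neg_sq, ← hπsymm]] at hvarpos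
    linarith
  have hcdf (x : ℝ) : 1 - ∫ t in Iic x, π t = ∫ t in Ioi x, π t := by
    rw [← hπone, ← intervalIntegral.integral_Iic_add_Ioi hπint.integrableOn hπint.integrableOn,
      add_sub_cancel_left]
  have hφ2 : ∫ x in Ioi 0, φ (2 * x) = 1 / 4 := by
    rw [integral_Ioi_comp_two_mul_of_even fun t => (hφsymm t).symm, hφone, one_div]
  have hφ2i : IntegrableOn (fun x => φ (2 * x)) (Ioi 0) :=
    (hφint.comp_mul_left' two_ne_zero).integrableOn
  have hgap (x : ℝ) (hx : x ∈ Ioi 0) :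
      0 < (∫ t in Ioi 0, t ^ 2 * π t) - 2 * x ^ 2 * ∫ t in Ioi x, π t :=
    sub_pos.2 (two_mul_sq_mul_integral_Ioi_lt hπnonneg hπint hanti hmom hm hx)
  have hD := integrableOn_sub_sq_mul_integral_Ioi_mul hπnonneg hπint hφ2i fun x hx =>
    (hgap x hx).le
  simp only [hcdf]
  rw [integral_Ioi_mul_integral_Ioi_mul_eq hπint hmom hφ2i hφ2 hD]
  have hpos := setIntegral_mul_pos measurableSet_Ioi hgap (fun x _ => hφnonneg (2 * x)) hφ2i hD
    (by norm_num [hφ2])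
  linarith

/-- Positivity of the unit-lag covariance of a symmetric random-walk
Metropolis chain with a symmetric unimodal target. -/
theorem covariance_pos
    (π φ : ℝ → ℝ) (hπmeas : Measurable π) (hφmeas : Measurable φ)
    (hπnonneg : ∀ x, 0 ≤ π x) (hφnonneg : ∀ x, 0 ≤ φ x)
    (hπint : Integrable π) (hφint : Integrable φ)
    (hπone : ∫ x, π x = 1) (hφone : ∫ x, φ x = 1)
    (hπsymm : ∀ t, π t = π (-t)) (hφsymm : ∀ t, φ t = φ (-t))
    (hmono : MonotoneOn π (Set.Iic (0 : ℝ)))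
    (hanti : AntitoneOn π (Set.Ici (0 : ℝ)))
    (hmom : Integrable (fun x => x ^ 2 * π x))
    (hvarpos : 0 < ∫ x, x ^ 2 * π x) :
    0 < 4 * ∫ x in Set.Ioi (0 : ℝ),
        x * (1 - ∫ t in Set.Iic x, π t) * (1 - 4 * x * φ (2 * x)) :=
  covariance_pos_general π φ hπnonneg hφnonneg hπint hφint hπone hφone hπsymm hφsymm hanti hmom
    hvarpos
end

section
/- Let π be a strictly positive, continuously differentiable, log-concave probability density on ℝ with CDF Π. Define h(y) = y · π(y)/(1 - Π(y)) for y > 0. Then h is strictly increasing on (0, ∞), and consequently the equation h(y) = 2, i.e., 2(1 - Π(y)) = y π(y), has at most one solution y > 0. -/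
open MeasureTheory Set

private lemma concave_four {f : ℝ → ℝ} (hf : ConcaveOn ℝ Set.univ f)
    {x s d : ℝ} (hxs : x ≤ s) (hd : 0 ≤ d) :
    f x + f (s + d) ≤ f (x + d) + f s := by
  rcases eq_or_lt_of_le (by linarith : x ≤ s + d) with h | h
  · have hd0 : d = 0 := by linarith
    have hxs' : x = s := by linarith
    subst hd0; subst hxs'; simp
  · set t : ℝ := d / (s + d - x) with ht
    have hden : 0 < s + d - x := by linarith
    have ht0 : 0 ≤ t := div_nonneg hd hden.le
    have ht1 : t ≤ 1 := by rw [ht, div_le_one hden]; linarith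
    have h1 := hf.2 (mem_univ x) (mem_univ (s + d))
      (by linarith : (0:ℝ) ≤ 1 - t) ht0 (by ring)
    have h2 := hf.2 (mem_univ x) (mem_univ (s + d))
      ht0 (by linarith : (0:ℝ) ≤ 1 - t) (by ring)
    have e1 : (1 - t) • x + t • (s + d) = x + d := by
      simp only [smul_eq_mul, ht]
      field_simp
      ring
    have e2 : t • x + (1 - t) • (s + d) = s := by
      simp only [smul_eq_mul, ht]
      field_simp
      ring
    rw [e1] at h1; rw [e2] at h2
    simp only [smul_eq_mul] at h1 h2
    linarith

/-- For a positive, C¹, log-concave density, `h(y) = y·π(y)/(1-Π(y))` is strictly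
increasing on `(0,∞)`, so `h(y) = 2` has at most one solution. -/
theorem hazard_strictMono_and_unique_root
    (π : ℝ → ℝ) (hpos : ∀ x, 0 < π x) (hC1 : ContDiff ℝ 1 π)
    (hlc : ConcaveOn ℝ Set.univ (fun x => Real.log (π x)))
    (hint : Integrable π) (hone : ∫ x, π x = 1)
    (hlt : ∀ y : ℝ, (∫ t in Set.Iic y, π t) < 1) :
    StrictMonoOn (fun y => y * π y / (1 - ∫ t in Set.Iic y, π t)) (Set.Ioi (0 : ℝ)) ∧
    ∀ y₁ ∈ Set.Ioi (0 : ℝ), ∀ y₂ ∈ Set.Ioi (0 : ℝ),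
      y₁ * π y₁ / (1 - ∫ t in Set.Iic y₁, π t) = 2 →
      y₂ * π y₂ / (1 - ∫ t in Set.Iic y₂, π t) = 2 → y₁ = y₂ := by
  have key : ∀ y : ℝ, (1 - ∫ t in Set.Iic y, π t) = ∫ t in Set.Ioi y, π t := by
    intro y
    have h := intervalIntegral.integral_Iic_add_Ioi (b := y) hint.integrableOn hint.integrableOn
    rw [hone] at h
    linarith
  have hSpos : ∀ y : ℝ, 0 < ∫ t in Set.Ioi y, π t := by
    intro y
    rw [← key]
    linarith [hlt y]
  -- hazard monotonicity
  have hmono : ∀ x y : ℝ, x ≤ y →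
      π x * (∫ t in Set.Ioi y, π t) ≤ π y * (∫ t in Set.Ioi x, π t) := by
    intro x y hxy
    set d := y - x with hdd
    have hd : 0 ≤ d := by simp [hdd]; linarith
    have hyd : y = x + d := by ring
    -- translation identity
    have hshift : (∫ t in Set.Ioi y, π t) = ∫ s in Set.Ioi x, π (s + d) := by
      have h1 : (∫ s in Set.Ioi x, π (s + d))
          = ∫ s, (Set.Ioi y).indicator π (s + d) := by
        rw [← integral_indicator measurableSet_Ioi]
        congr 1
        ext s
        by_cases hs : s ∈ Set.Ioi x
        · have : s + d ∈ Set.Ioi y := by simp at hs ⊢; linarith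
          simp [indicator_of_mem hs, indicator_of_mem this]
        · have : s + d ∉ Set.Ioi y := by simp at hs ⊢; linarith
          simp [indicator_of_notMem hs, indicator_of_notMem this]
      rw [h1, integral_add_right_eq_self ((Set.Ioi y).indicator π) d,
        integral_indicator measurableSet_Ioi]
    rw [hshift, ← integral_const_mul, ← integral_const_mul]
    apply setIntegral_mono_on
    · exact ((hint.comp_add_right d).const_mul (π x)).integrableOn
    · exact (hint.const_mul (π y)).integrableOn
    · exact measurableSet_Ioi
    · intro s hs
      have hxs : x ≤ s := le_of_lt hs
      have hlog := concave_four hlc hxs hd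
      rw [← hyd] at hlog
      calc π x * π (s + d)
          = Real.exp (Real.log (π x) + Real.log (π (s + d))) := by
            rw [Real.exp_add, Real.exp_log (hpos _), Real.exp_log (hpos _)]
        _ ≤ Real.exp (Real.log (π y) + Real.log (π s)) := Real.exp_le_exp.mpr hlog
        _ = π y * π s := by
            rw [Real.exp_add, Real.exp_log (hpos _), Real.exp_log (hpos _)]
  have hsm : StrictMonoOn (fun y => y * π y / (1 - ∫ t in Set.Iic y, π t))
      (Set.Ioi (0 : ℝ)) := by
    intro a ha b hb hab
    simp only [Set.mem_Ioi] at ha hb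
    simp only
    rw [key a, key b, div_lt_div_iff₀ (hSpos a) (hSpos b)]
    have h1 := hmono a b hab.le
    have h2 : 0 < π b * (∫ t in Set.Ioi a, π t) := mul_pos (hpos b) (hSpos a)
    nlinarith [hSpos b, hpos a]
  refine ⟨hsm, ?_⟩
  intro y₁ hy₁ y₂ hy₂ h₁ h₂
  exact hsm.injOn hy₁ hy₂ (by rw [h₁, h₂])
end

section
/- Let π be a continuous, strictly positive probability density on ℝ with CDF Π and finite second moment, and suppose π is log-concave. Then the function w(y) = y²(1 − Π(y)) has a unique critical point y* in (0,∞) satisfying 2(1 − Π(y*)) = y* π(y*), and y* is the global maximizer of w on [0, ∞). -/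
/-!
Log-concavity of `π` makes the hazard rate `π y / (1 - Π y)` nondecreasing: shifting the tail
beyond `y` onto the tail beyond `x ≤ y` compares `π x * π t` with `π y * π (t + x - y)`.
Hence `y ↦ y * π y / (1 - Π y)` is strictly increasing on `(0, ∞)` and takes the value `2`,
i.e. `w' y = 0` for `w y = y ^ 2 * (1 - Π y)`, at most once. Since `w 0 = 0`, `w > 0` on
`(0, ∞)` and `w y ≤ ∫ t in Ioi y, t ^ 2 * π t → 0`, the maximum of `w` on `[0, ∞)` is attained
at an interior point, which is therefore that critical point.
-/

open MeasureTheory Set Filter Topology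

theorem ConcaveOn.map_add_map_le_of_mem_Icc {s : Set ℝ} {g : ℝ → ℝ} (hg : ConcaveOn ℝ s g)
    {x y t : ℝ} (hx : x ∈ s) (ht : t ∈ s) (hy : y ∈ Icc x t) :
    g x + g t ≤ g y + g (x + t - y) := by
  obtain ⟨hxy, hyt⟩ := hy
  rcases hxy.trans hyt |>.eq_or_lt with rfl | hxt
  · obtain rfl : y = x := le_antisymm hyt hxy
    simp
  have hd : 0 < t - x := sub_pos.2 hxt
  set a := (t - y) / (t - x)
  set b := (y - x) / (t - x)
  have ha : 0 ≤ a := div_nonneg (sub_nonneg.2 hyt) hd.le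
  have hb : 0 ≤ b := div_nonneg (sub_nonneg.2 hxy) hd.le
  have hab : a + b = 1 := by simp only [a, b]; field_simp; ring
  have hy : a • x + b • t = y := by simp only [smul_eq_mul, a, b]; field_simp; ring
  have hy' : b • x + a • t = x + t - y := by simp only [smul_eq_mul, a, b]; field_simp; ring
  have h₁ := hg.2 hx ht ha hb hab
  have h₂ := hg.2 hx ht hb ha (by rw [add_comm, hab])
  rw [hy] at h₁
  rw [hy'] at h₂
  simp only [smul_eq_mul] at h₁ h₂
  linear_combination h₁ + h₂ - (g x + g t) * hab

theorem mul_le_mul_of_concaveOn_log {f : ℝ → ℝ} (hpos : ∀ x, 0 < f x)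
    (hlc : ConcaveOn ℝ univ (fun x => Real.log (f x))) {x y t : ℝ} (hy : y ∈ Icc x t) :
    f x * f t ≤ f y * f (x + t - y) := by
  have h := hlc.map_add_map_le_of_mem_Icc (mem_univ x) (mem_univ t) hy
  rw [← Real.log_mul (hpos x).ne' (hpos t).ne', ← Real.log_mul (hpos y).ne' (hpos _).ne'] at h
  exact (Real.log_le_log_iff (by positivity [hpos x, hpos t]) (mul_pos (hpos _) (hpos _))).1 h

section Tail

variable {E : Type*} [NormedAddCommGroup E] [NormedSpace ℝ E]

theorem integral_Ioi_comp_add_right (f : ℝ → E) (a c : ℝ) :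
    ∫ t in Ioi a, f (t + c) = ∫ t in Ioi (a + c), f t := by
  simpa [preimage_add_const_Ioi] using
    (measurePreserving_add_right volume c).setIntegral_preimage_emb
      (MeasurableEquiv.addRight c).measurableEmbedding f (Ioi (a + c))

theorem tendsto_integral_Ioi_atTop {f : ℝ → E} (hf : Integrable f) :
    Tendsto (fun y => ∫ t in Ioi y, f t) atTop (𝓝 0) := by
  have h := tendsto_setIntegral_of_antitone (μ := volume) (fun y : ℝ => measurableSet_Ioi)
    (fun _ _ hxy => Ioi_subset_Ioi hxy) ⟨0, hf.integrableOn⟩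
  have hempty : ⋂ y : ℝ, Ioi y = ∅ := iInter_eq_empty_iff.2 fun x => ⟨x, lt_irrefl x⟩
  rwa [hempty, Measure.restrict_empty, integral_zero_measure] at h

theorem hasDerivAt_integral_Ioi [CompleteSpace E] {f : ℝ → E} (hf : Continuous f)
    (hint : Integrable f) (y : ℝ) :
    HasDerivAt (fun u => ∫ t in Ioi u, f t) (-f y) y := by
  have hd := (intervalIntegral.integral_hasDerivAt_right (a := 0) (b := y) hint.intervalIntegrable
    (hf.stronglyMeasurableAtFilter _ _) hf.continuousAt).const_sub (∫ t in Ioi 0, f t)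
  refine hd.congr_of_eventuallyEq (Eventually.of_forall fun u => ?_)
  rw [eq_sub_iff_add_eq', intervalIntegral.integral_interval_add_Ioi hint.integrableOn
    hint.integrableOn]

end Tail

theorem exists_isMaxOn_Ici_of_tendsto_zero {f : ℝ → ℝ} {a b : ℝ} (hf : ContinuousOn f (Ici a))
    (hlim : Tendsto f atTop (𝓝 0)) (ha : f a = 0) (hb : b ∈ Ici a) (hfb : 0 < f b) :
    ∃ c ∈ Ioi a, IsMaxOn f (Ici a) c := by
  have hfar : ∀ᶠ x in cocompact ℝ ⊓ 𝓟 (Ici a), f x ≤ f b := by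
    rw [cocompact_eq_atBot_atTop, inf_sup_right, (disjoint_atBot_principal_Ici a).eq_bot,
      bot_sup_eq]
    exact inf_le_left (a := atTop) ((hlim.eventually (gt_mem_nhds hfb)).mono fun _ => le_of_lt)
  obtain ⟨c, hc, hmax⟩ := hf.exists_isMaxOn' isClosed_Ici hb hfar
  refine ⟨c, mem_Ioi.2 (lt_of_le_of_ne hc fun hac => ?_), hmax⟩
  exact (hfb.trans_le (hmax hb)).ne' (hac ▸ ha)

section Density

variable {π : ℝ → ℝ}

theorem one_sub_integral_Iic (hint : Integrable π) (hone : ∫ x, π x = 1) (y : ℝ) :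
    1 - ∫ t in Iic y, π t = ∫ t in Ioi y, π t := by
  rw [← hone, ← intervalIntegral.integral_Iic_add_Ioi hint.integrableOn hint.integrableOn,
    add_sub_cancel_left]

theorem integral_Ioi_pos (hpos : ∀ x, 0 < π x) (hint : Integrable π) (y : ℝ) :
    0 < ∫ t in Ioi y, π t := by
  rw [setIntegral_pos_iff_support_of_nonneg_ae (.of_forall fun x => (hpos x).le)
    hint.integrableOn, Function.support_eq_univ fun x => (hpos x).ne', univ_inter,
    Real.volume_Ioi]
  exact ENNReal.zero_lt_top

theorem mul_integral_Ioi_le_of_concaveOn_log (hpos : ∀ x, 0 < π x)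
    (hlc : ConcaveOn ℝ univ (fun x => Real.log (π x))) (hint : Integrable π) {x y : ℝ}
    (hxy : x ≤ y) :
    π x * ∫ t in Ioi y, π t ≤ π y * ∫ t in Ioi x, π t := by
  have hshift : Integrable fun t => π (t + (x - y)) := hint.comp_add_right (x - y)
  calc π x * ∫ t in Ioi y, π t = ∫ t in Ioi y, π x * π t := (integral_const_mul _ _).symm
    _ ≤ ∫ t in Ioi y, π y * π (t + (x - y)) :=
        setIntegral_mono_on (hint.integrableOn.const_mul _) (hshift.integrableOn.const_mul _)
          measurableSet_Ioi fun t ht =>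
            (mul_le_mul_of_concaveOn_log hpos hlc ⟨hxy, le_of_lt ht⟩).trans_eq
              (by rw [add_sub_right_comm, add_comm])
    _ = π y * ∫ t in Ioi x, π t := by
        rw [integral_const_mul, integral_Ioi_comp_add_right, add_sub_cancel]

theorem strictMonoOn_mul_hazard (hpos : ∀ x, 0 < π x)
    (hlc : ConcaveOn ℝ univ (fun x => Real.log (π x))) (hint : Integrable π) :
    StrictMonoOn (fun y => y * π y / ∫ t in Ioi y, π t) (Ioi 0) := by
  intro x hx y _ hxy
  have hGx := integral_Ioi_pos hpos hint x
  have hGy := integral_Ioi_pos hpos hint y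
  have hhazard : π x / (∫ t in Ioi x, π t) ≤ π y / ∫ t in Ioi y, π t := by
    rw [div_le_div_iff₀ hGx hGy]
    exact mul_integral_Ioi_le_of_concaveOn_log hpos hlc hint hxy.le
  simp only [mul_div_assoc]
  calc x * (π x / ∫ t in Ioi x, π t) < y * (π x / ∫ t in Ioi x, π t) :=
        mul_lt_mul_of_pos_right hxy (div_pos (hpos x) hGx)
    _ ≤ y * (π y / ∫ t in Ioi y, π t) := mul_le_mul_of_nonneg_left hhazard (hx.le.trans hxy.le)

theorem tendsto_sq_mul_integral_Ioi (hnonneg : ∀ x, 0 ≤ π x) (hint : Integrable π)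
    (hmom : Integrable (fun x => x ^ 2 * π x)) :
    Tendsto (fun y => y ^ 2 * ∫ t in Ioi y, π t) atTop (𝓝 0) := by
  refine tendsto_of_tendsto_of_tendsto_of_le_of_le' tendsto_const_nhds
    (tendsto_integral_Ioi_atTop hmom) (.of_forall fun y => ?_) ?_
  · exact mul_nonneg (sq_nonneg y) (setIntegral_nonneg measurableSet_Ioi fun t _ => hnonneg t)
  filter_upwards [eventually_ge_atTop 0] with y hy
  rw [← integral_const_mul]
  refine setIntegral_mono_on (hint.integrableOn.const_mul _) hmom.integrableOn measurableSet_Ioi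
    fun t ht => mul_le_mul_of_nonneg_right ?_ (hnonneg t)
  exact pow_le_pow_left₀ hy (le_of_lt ht) 2

theorem hasDerivAt_sq_mul_integral_Ioi (hcont : Continuous π) (hint : Integrable π) (y : ℝ) :
    HasDerivAt (fun y => y ^ 2 * ∫ t in Ioi y, π t)
      (y * (2 * (∫ t in Ioi y, π t) - y * π y)) y := by
  refine ((hasDerivAt_pow 2 y).fun_mul (hasDerivAt_integral_Ioi hcont hint y)).congr_deriv ?_
  norm_num
  ring

end Density

/-- For a continuous, strictly positive, log-concave density with finite second
moment, `w(y) = y²(1 − Π(y))` has a unique critical point `y* > 0` solving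
`2(1 − Π(y*)) = y* π(y*)`, and `y*` is the global maximizer of `w` on `[0,∞)`. -/
theorem unique_critical_point_global_max
    (π : ℝ → ℝ) (hcont : Continuous π) (hpos : ∀ x, 0 < π x)
    (hlc : ConcaveOn ℝ Set.univ (fun x => Real.log (π x)))
    (hint : Integrable π) (hone : ∫ x, π x = 1)
    (hmom : Integrable (fun x => x ^ 2 * π x)) :
    ∃ ystar : ℝ, 0 < ystar ∧
      2 * (1 - ∫ t in Set.Iic ystar, π t) = ystar * π ystar ∧
      (∀ y : ℝ, 0 < y → 2 * (1 - ∫ t in Set.Iic y, π t) = y * π y → y = ystar) ∧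
      (∀ y : ℝ, 0 ≤ y →
        y ^ 2 * (1 - ∫ t in Set.Iic y, π t)
          ≤ ystar ^ 2 * (1 - ∫ t in Set.Iic ystar, π t)) := by
  simp_rw [one_sub_integral_Iic hint hone]
  obtain ⟨c, hc, hmax⟩ := exists_isMaxOn_Ici_of_tendsto_zero
    (fun y _ => (hasDerivAt_sq_mul_integral_Ioi hcont hint y).continuousAt.continuousWithinAt)
    (tendsto_sq_mul_integral_Ioi (fun x => (hpos x).le) hint hmom) (by simp)
    (mem_Ici.2 zero_le_one) (by simpa using integral_Ioi_pos hpos hint 1)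
  have hcrit : 2 * (∫ t in Ioi c, π t) = c * π c := by
    have h := (hmax.isLocalMax (Ici_mem_nhds hc)).hasDerivAt_eq_zero
      (hasDerivAt_sq_mul_integral_Ioi hcont hint c)
    exact sub_eq_zero.1 ((mul_eq_zero.1 h).resolve_left hc.ne')
  have hratio : ∀ y, 2 * (∫ t in Ioi y, π t) = y * π y →
      y * π y / (∫ t in Ioi y, π t) = 2 := fun y hy => by
    rw [← hy, mul_div_cancel_right₀ _ (integral_Ioi_pos hpos hint y).ne']
  refine ⟨c, hc, hcrit, fun y hy hyc => ?_, fun y hy => hmax hy⟩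
  exact strictMonoOn_mul_hazard hpos hlc hint |>.injOn hy hc <|
    (hratio y hyc).trans (hratio c hcrit).symm
end
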